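/- Let F denote the real vector space of trilinear forms C : V × V × V → ℝ that are alternating in the last two arguments and semi-basic in the last two arguments, and let Λ³_v denote the space of alternating trilinear forms on V that are semi-basic in every argument. For a linear map K : V → V define τ_K : F → Λ³_v by (τ_K C)(X,Y,Z) = C(KX,Y,Z) − C(KY,X,Z) + C(KZ,X,Y). Then both τ_J : F → Λ³_v and τ_h : F → Λ³_v are well defined (i.e. τ_J C and τ_h C are indeed alternating and semi-basic in all arguments for every C ∈ F) and surjective. -/

import Mathlib

open Module

/-- Model of the tangent space of `J¹π` at a point: `V = ℝ^{n+1} × ℝ^n`, the first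
factor spanned by the horizontal vectors `e_0, …, e_n` (`e_0` the time direction),
the second by the vertical vectors `f_1, …, f_n` (here `f_k = fbase ⟨k-1,_⟩`). -/
abbrev Vv (n : ℕ) : Type := (Fin (n + 1) → ℝ) × (Fin n → ℝ)

/-- A vector of `V` is vertical if it lies in the span of `f_1, …, f_n`,
i.e. its first component vanishes. -/
def IsVert {n : ℕ} (v : Vv n) : Prop := v.1 = 0

/-- The vertical endomorphism `J : V → V`: `J e_0 = 0`, `J e_i = f_i` (1 ≤ i ≤ n),
`J f_i = 0`. -/
noncomputable def Jv (n : ℕ) : Vv n →ₗ[ℝ] Vv n :=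
  LinearMap.prod 0
    ((LinearMap.funLeft ℝ ℝ Fin.succ).comp (LinearMap.fst ℝ (Fin (n + 1) → ℝ) (Fin n → ℝ)))

/-- The horizontal projector `h : V → V`: `h e_α = e_α` (0 ≤ α ≤ n), `h f_i = 0`. -/
noncomputable def Hv (n : ℕ) : Vv n →ₗ[ℝ] Vv n :=
  LinearMap.prod (LinearMap.fst ℝ (Fin (n + 1) → ℝ) (Fin n → ℝ)) 0

set_option maxSynthPendingDepth 3
set_option synthInstance.maxHeartbeats 400000

/-- `F`: the space of trilinear forms on `V` that are alternating in the last two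
arguments and semi-basic in the last two arguments (model of `T* ⊗ Λ²T_v*`). -/
noncomputable def Fsub (n : ℕ) : Submodule ℝ (Vv n →ₗ[ℝ] Vv n →ₗ[ℝ] Vv n →ₗ[ℝ] ℝ) where
  carrier := { C | (∀ X Y Z, C X Y Z = - C X Z Y) ∧
    (∀ X v Z, IsVert v → C X v Z = 0) ∧
    (∀ X Y v, IsVert v → C X Y v = 0) }
  add_mem' := by
    rintro A B ⟨a1, a2, a3⟩ ⟨b1, b2, b3⟩
    refine ⟨fun X Y Z => ?_, fun X v Z hv => ?_, fun X Y v hv => ?_⟩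
    · simp only [LinearMap.add_apply]; rw [a1, b1]; ring
    · simp [a2 X v Z hv, b2 X v Z hv]
    · simp [a3 X Y v hv, b3 X Y v hv]
  zero_mem' := by
    refine ⟨fun X Y Z => ?_, fun X v Z hv => ?_, fun X Y v hv => ?_⟩ <;> simp
  smul_mem' := by
    rintro c A ⟨a1, a2, a3⟩
    refine ⟨fun X Y Z => ?_, fun X v Z hv => ?_, fun X Y v hv => ?_⟩
    · simp only [LinearMap.smul_apply, smul_eq_mul]; rw [a1]; ring
    · simp [a2 X v Z hv]
    · simp [a3 X Y v hv]

/-- `Λ³T_v*`: the space of alternating trilinear forms on `V` that are semi-basic in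
every argument. -/
noncomputable def Lv3 (n : ℕ) : Submodule ℝ (Vv n →ₗ[ℝ] Vv n →ₗ[ℝ] Vv n →ₗ[ℝ] ℝ) where
  carrier := { D | (∀ X Y Z, D X Y Z = - D Y X Z) ∧
    (∀ X Y Z, D X Y Z = - D X Z Y) ∧
    (∀ v Y Z, IsVert v → D v Y Z = 0) ∧
    (∀ X v Z, IsVert v → D X v Z = 0) ∧
    (∀ X Y v, IsVert v → D X Y v = 0) }
  add_mem' := by
    rintro A B ⟨a1, a2, a3, a4, a5⟩ ⟨b1, b2, b3, b4, b5⟩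
    refine ⟨fun X Y Z => ?_, fun X Y Z => ?_, fun v Y Z hv => ?_, fun X v Z hv => ?_,
      fun X Y v hv => ?_⟩
    · simp only [LinearMap.add_apply]; rw [a1, b1]; ring
    · simp only [LinearMap.add_apply]; rw [a2, b2]; ring
    · simp [a3 v Y Z hv, b3 v Y Z hv]
    · simp [a4 X v Z hv, b4 X v Z hv]
    · simp [a5 X Y v hv, b5 X Y v hv]
  zero_mem' := by
    refine ⟨fun X Y Z => ?_, fun X Y Z => ?_, fun v Y Z hv => ?_, fun X v Z hv => ?_,
      fun X Y v hv => ?_⟩ <;> simp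
  smul_mem' := by
    rintro c A ⟨a1, a2, a3, a4, a5⟩
    refine ⟨fun X Y Z => ?_, fun X Y Z => ?_, fun v Y Z hv => ?_, fun X v Z hv => ?_,
      fun X Y v hv => ?_⟩
    · simp only [LinearMap.smul_apply, smul_eq_mul]; rw [a1]; ring
    · simp only [LinearMap.smul_apply, smul_eq_mul]; rw [a2]; ring
    · simp [a3 v Y Z hv]
    · simp [a4 X v Z hv]
    · simp [a5 X Y v hv]

/-- The alternating operator `τ_K`:
`(τ_K C)(X,Y,Z) = C(KX,Y,Z) − C(KY,X,Z) + C(KZ,X,Y)`. -/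
noncomputable def tauF (n : ℕ) (K : Vv n →ₗ[ℝ] Vv n)
    (C : Vv n →ₗ[ℝ] Vv n →ₗ[ℝ] Vv n →ₗ[ℝ] ℝ) : Vv n → Vv n → Vv n → ℝ :=
  fun X Y Z => C (K X) Y Z - C (K Y) X Z + C (K Z) X Y

/-! Write `t X = X⁰ e₀` for the time component and `σ` for the lift `f_i ↦ e_i`, so that
`σ J = h - t`. Both `J` and `h` kill vertical vectors, which makes `τ_J` and `τ_h` land in `Λ³_v`.
A form `D ∈ Λ³_v` does not see vertical components, so `D(hX, Y, Z) = D(X, Y, Z)` and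
`τ_h D = 3 D`. For `τ_J` take `C(U, Y, Z) = ⅓ D(σU, AY, AZ)` with `A = 1 + t/2`. Since `D`
vanishes when `t` hits two of its arguments, `C(JX, Y, Z) = ⅓ (D(X,Y,Z) - a + (b + c)/2)` with
`a = D(tX,Y,Z)`, `b = D(X,tY,Z)`, `c = D(X,Y,tZ)`; the other two terms of `τ_J C` are its cyclic
permutations, in which `-a + (b + c)/2` sums to zero. -/

section

variable {n : ℕ} {K : Vv n →ₗ[ℝ] Vv n} {C D : Vv n →ₗ[ℝ] Vv n →ₗ[ℝ] Vv n →ₗ[ℝ] ℝ}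

noncomputable def tauForm (n : ℕ) (K : Vv n →ₗ[ℝ] Vv n)
    (C : Vv n →ₗ[ℝ] Vv n →ₗ[ℝ] Vv n →ₗ[ℝ] ℝ) : Vv n →ₗ[ℝ] Vv n →ₗ[ℝ] Vv n →ₗ[ℝ] ℝ :=
  C.comp K - (C.comp K).flip + LinearMap.lflip.comp (C.comp K).flip

lemma tauForm_apply (X Y Z : Vv n) : tauForm n K C X Y Z = tauF n K C X Y Z := rfl

lemma tauForm_mem_Lv3 (hK : ∀ v, IsVert v → K v = 0) (hC : C ∈ Fsub n) :
    tauForm n K C ∈ Lv3 n := by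
  obtain ⟨hCalt, hCvert₂, hCvert₃⟩ := hC
  refine ⟨fun X Y Z => ?_, fun X Y Z => ?_, fun v Y Z hv => ?_, fun X v Z hv => ?_,
    fun X Y v hv => ?_⟩ <;> simp only [tauForm_apply, tauF]
  · linarith [hCalt (K Z) Y X]
  · linarith [hCalt (K X) Y Z]
  · simp [hK v hv, hCvert₂ _ v _ hv]
  · simp [hK v hv, hCvert₂ _ v _ hv, hCvert₃ _ _ v hv]
  · simp [hK v hv, hCvert₃ _ _ v hv]

noncomputable def timeVec (n : ℕ) : Vv n := (Pi.single 0 1, 0)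

noncomputable def timeProj (n : ℕ) : Vv n →ₗ[ℝ] Vv n :=
  ((LinearMap.proj 0).comp (LinearMap.fst ℝ (Fin (n + 1) → ℝ) (Fin n → ℝ))).smulRight
    (timeVec n)

noncomputable def horizLift (n : ℕ) : Vv n →ₗ[ℝ] Vv n :=
  LinearMap.prod
    ((Fin.consLinearEquiv ℝ fun _ => ℝ).toLinearMap ∘ₗ LinearMap.inr ℝ ℝ (Fin n → ℝ) ∘ₗ
      LinearMap.snd ℝ (Fin (n + 1) → ℝ) (Fin n → ℝ)) 0

lemma timeProj_apply (X : Vv n) : timeProj n X = X.1 0 • timeVec n := rfl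

lemma timeProj_eq_zero_of_isVert {v : Vv n} (hv : IsVert v) : timeProj n v = 0 := by
  simp [timeProj_apply, show v.1 0 = 0 by rw [hv]; rfl]

lemma Jv_eq_zero_of_isVert {v : Vv n} (hv : IsVert v) : Jv n v = 0 := by
  simp [Jv, show v.1 = 0 from hv]

lemma Hv_eq_zero_of_isVert {v : Vv n} (hv : IsVert v) : Hv n v = 0 := by
  simp [Hv, show v.1 = 0 from hv]

lemma isVert_sub_Hv (X : Vv n) : IsVert (X - Hv n X) := by
  simp [IsVert, Hv]

lemma horizLift_Jv (X : Vv n) : horizLift n (Jv n X) = Hv n X - timeProj n X := by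
  refine Prod.ext (funext fun j => Fin.cases ?_ (fun i => ?_) j) ?_ <;>
    simp [horizLift, Jv, Hv, timeProj_apply, timeVec, Fin.succ_ne_zero]

lemma map_Hv_eq_of_vert_eq_zero {M : Type*} [AddCommGroup M] [Module ℝ M] {f : Vv n →ₗ[ℝ] M}
    (hf : ∀ v, IsVert v → f v = 0) (X : Vv n) : f (Hv n X) = f X := by
  rw [← sub_eq_zero, ← map_sub, ← neg_sub, map_neg, hf _ (isVert_sub_Hv X), neg_zero]

lemma Lv3_le_Fsub : Lv3 n ≤ Fsub n :=
  fun _ ⟨_, h23, _, hvert₂, hvert₃⟩ => ⟨h23, hvert₂, hvert₃⟩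

lemma tauF_smul (c : ℝ) (X Y Z : Vv n) : tauF n K (c • C) X Y Z = c * tauF n K C X Y Z := by
  simp only [tauF, LinearMap.smul_apply, smul_eq_mul]
  ring

lemma apply_Hv_of_mem_Lv3 (hD : D ∈ Lv3 n) (X : Vv n) : D (Hv n X) = D X :=
  map_Hv_eq_of_vert_eq_zero (fun v hv => LinearMap.ext₂ fun Y Z => hD.2.2.1 v Y Z hv) X

lemma tauF_Hv_of_mem_Lv3 (hD : D ∈ Lv3 n) (X Y Z : Vv n) :
    tauF n (Hv n) D X Y Z = 3 * D X Y Z := by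
  simp only [tauF, apply_Hv_of_mem_Lv3 hD]
  obtain ⟨h12, h23, -, -, -⟩ := hD
  linarith [h12 Y X Z, h12 Z X Y, h23 X Y Z]

noncomputable def timeStretch (n : ℕ) : Vv n →ₗ[ℝ] Vv n :=
  LinearMap.id + (2⁻¹ : ℝ) • timeProj n

lemma timeStretch_apply (X : Vv n) : timeStretch n X = X + (2⁻¹ : ℝ) • timeProj n X := rfl

lemma timeStretch_of_isVert {v : Vv n} (hv : IsVert v) : timeStretch n v = v := by
  simp [timeStretch_apply, timeProj_eq_zero_of_isVert hv]

noncomputable def tauJPreimage (D : Vv n →ₗ[ℝ] Vv n →ₗ[ℝ] Vv n →ₗ[ℝ] ℝ) :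
    Vv n →ₗ[ℝ] Vv n →ₗ[ℝ] Vv n →ₗ[ℝ] ℝ :=
  (3⁻¹ : ℝ) • (D.compl₁₂ (horizLift n) (timeStretch n)).compr₂ (timeStretch n).dualMap

lemma tauJPreimage_apply (U Y Z : Vv n) :
    tauJPreimage D U Y Z = 3⁻¹ * D (horizLift n U) (timeStretch n Y) (timeStretch n Z) := rfl

lemma tauJPreimage_mem_Fsub (hD : D ∈ Lv3 n) : tauJPreimage D ∈ Fsub n := by
  obtain ⟨-, h23, -, hvert₂, hvert₃⟩ := hD
  refine ⟨fun U Y Z => ?_, fun U v Z hv => ?_, fun U Y v hv => ?_⟩ <;>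
    simp only [tauJPreimage_apply]
  · rw [h23]; ring
  · rw [timeStretch_of_isVert hv, hvert₂ _ v _ hv, mul_zero]
  · rw [timeStretch_of_isVert hv, hvert₃ _ _ v hv, mul_zero]

lemma apply_horizLift_Jv (hD : D ∈ Lv3 n) (X Y Z : Vv n) :
    D (horizLift n (Jv n X)) (timeStretch n Y) (timeStretch n Z) =
      D X Y Z - D (timeProj n X) Y Z + 2⁻¹ * (D X (timeProj n Y) Z + D X Y (timeProj n Z)) := by
  rw [horizLift_Jv, map_sub, apply_Hv_of_mem_Lv3 hD]
  obtain ⟨h12, h23, -, -, -⟩ := hD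
  have h₁₂ : ∀ Z, D (timeVec n) (timeVec n) Z = 0 := fun Z => by
    linarith [h12 (timeVec n) (timeVec n) Z]
  have h₂₃ : ∀ X, D X (timeVec n) (timeVec n) = 0 := fun X => by
    linarith [h23 X (timeVec n) (timeVec n)]
  have h₁₃ : ∀ Y, D (timeVec n) Y (timeVec n) = 0 := fun Y => by
    rw [h23, h₁₂, neg_zero]
  simp only [timeStretch_apply, timeProj_apply, map_add, map_smul, LinearMap.add_apply,
    LinearMap.sub_apply, LinearMap.smul_apply, smul_eq_mul, h₁₂, h₂₃, h₁₃]
  ring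

lemma tauF_Jv_tauJPreimage (hD : D ∈ Lv3 n) (X Y Z : Vv n) :
    tauF n (Jv n) (tauJPreimage D) X Y Z = D X Y Z := by
  simp only [tauF, tauJPreimage_apply, apply_horizLift_Jv hD]
  obtain ⟨h12, h23, -, -, -⟩ := hD
  linarith [h12 Y X Z, h12 Z X Y, h23 X Y Z, h12 Y (timeProj n X) Z, h12 Z (timeProj n X) Y,
    h23 (timeProj n X) Z Y, h12 (timeProj n Y) X Z, h12 Z X (timeProj n Y),
    h23 X Z (timeProj n Y), h12 (timeProj n Z) X Y, h23 X (timeProj n Z) Y,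
    h12 Y X (timeProj n Z)]

end

theorem stmt5_general (n : ℕ) :
    (∀ C ∈ Fsub n, ∃ D ∈ Lv3 n, ∀ X Y Z, tauF n (Jv n) C X Y Z = D X Y Z) ∧
    (∀ C ∈ Fsub n, ∃ D ∈ Lv3 n, ∀ X Y Z, tauF n (Hv n) C X Y Z = D X Y Z) ∧
    (∀ D ∈ Lv3 n, ∃ C ∈ Fsub n, ∀ X Y Z, tauF n (Jv n) C X Y Z = D X Y Z) ∧
    (∀ D ∈ Lv3 n, ∃ C ∈ Fsub n, ∀ X Y Z, tauF n (Hv n) C X Y Z = D X Y Z) := by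
  refine ⟨fun C hC => ⟨_, tauForm_mem_Lv3 (fun _ => Jv_eq_zero_of_isVert) hC, fun _ _ _ => rfl⟩,
    fun C hC => ⟨_, tauForm_mem_Lv3 (fun _ => Hv_eq_zero_of_isVert) hC, fun _ _ _ => rfl⟩,
    fun D hD => ⟨_, tauJPreimage_mem_Fsub hD, tauF_Jv_tauJPreimage hD⟩,
    fun D hD => ⟨(3⁻¹ : ℝ) • D, Submodule.smul_mem _ _ (Lv3_le_Fsub hD), fun X Y Z => ?_⟩⟩
  rw [tauF_smul, tauF_Hv_of_mem_Lv3 hD]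
  ring

/-- Both `τ_J : F → Λ³T_v*` and `τ_h : F → Λ³T_v*` are well defined (for `C ∈ F`,
`τ_J C` and `τ_h C` are alternating trilinear forms, semi-basic in all arguments)
and surjective. -/
theorem stmt5 (n : ℕ) (hn : 1 ≤ n) :
    (∀ C ∈ Fsub n, ∃ D ∈ Lv3 n, ∀ X Y Z, tauF n (Jv n) C X Y Z = D X Y Z) ∧
    (∀ C ∈ Fsub n, ∃ D ∈ Lv3 n, ∀ X Y Z, tauF n (Hv n) C X Y Z = D X Y Z) ∧
    (∀ D ∈ Lv3 n, ∃ C ∈ Fsub n, ∀ X Y Z, tauF n (Jv n) C X Y Z = D X Y Z) ∧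
    (∀ D ∈ Lv3 n, ∃ C ∈ Fsub n, ∀ X Y Z, tauF n (Hv n) C X Y Z = D X Y Z) :=
  stmt5_general n
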